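/- arXiv:1001.4064 — 2 statements merged into one kernel-verified Lean document; each statement's English description precedes it below -/
import Mathlib

section
/- Let M = (M_p) be a strongly regular sequence satisfying property (P_γ) for some γ > 0, i.e., there exist a sequence (m′_p)_{p≥1} of positive reals and a constant a ≥ 1 with a⁻¹M_p ≤ M_{p-1}m′_p ≤ aM_p for all p ≥ 1 and with ((p+1)^{-γ}m′_p)_{p≥1} increasing. Then for every γ̃ with 0 < γ̃ < γ, the series Σ_{p≥1} (M_{p-1}/M_p)^{1/γ̃} converges. -/
theorem summable_of_Pgamma (M : ℕ → ℝ) (hpos : ∀ p, 0 < M p) (h0 : M 0 = 1)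
    (hlc : ∀ p, 1 ≤ p → (M p) ^ 2 ≤ M (p - 1) * M (p + 1))
    (hmg : ∃ A > (0 : ℝ), ∀ p ℓ : ℕ, M (p + ℓ) ≤ A ^ (p + ℓ) * M p * M ℓ)
    (hsnq : ∃ B > (0 : ℝ), ∀ p N : ℕ,
      ∑ ℓ ∈ Finset.Icc p N, M ℓ / (((ℓ : ℝ) + 1) * M (ℓ + 1)) ≤ B * M p / M (p + 1))
    (γ : ℝ) (hγ : 0 < γ) (m' : ℕ → ℝ) (a : ℝ) (ha : 1 ≤ a)
    (hm'pos : ∀ p, 1 ≤ p → 0 < m' p)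
    (hP1 : ∀ p : ℕ, 1 ≤ p → a⁻¹ * M p ≤ M (p - 1) * m' p ∧ M (p - 1) * m' p ≤ a * M p)
    (hP2 : ∀ p : ℕ, 1 ≤ p → ((p : ℝ) + 1) ^ (-γ) * m' p ≤ ((p : ℝ) + 2) ^ (-γ) * m' (p + 1))
    (γ' : ℝ) (hγ'0 : 0 < γ') (hγ' : γ' < γ) :
    Summable (fun p : ℕ => (M p / M (p + 1)) ^ (1 / γ')) := by
  have ha0 : (0 : ℝ) < a := lt_of_lt_of_le one_pos ha
  have hm1 : 0 < m' 1 := hm'pos 1 le_rfl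
  -- monotonicity: 2^(-γ) * m' 1 ≤ (p+2)^(-γ) * m' (p+1)
  have hmono : ∀ p : ℕ, (2 : ℝ) ^ (-γ) * m' 1 ≤ ((p : ℝ) + 2) ^ (-γ) * m' (p + 1) := by
    intro p
    induction p with
    | zero => norm_num
    | succ n ih =>
      refine le_trans ih ?_
      have := hP2 (n + 1) (by omega)
      push_cast at this ⊢
      have e : ((n : ℝ) + 1 + 1) = (n : ℝ) + 2 := by ring
      rw [e] at this
      linarith
  -- hence m' (p+1) ≥ c * (p+2)^γ with c = 2^(-γ) * m' 1
  set c : ℝ := (2 : ℝ) ^ (-γ) * m' 1 with hc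
  have hc0 : 0 < c := mul_pos (Real.rpow_pos_of_pos two_pos _) hm1
  have key : ∀ p : ℕ, M p / M (p + 1) ≤ (a / c) * ((p : ℝ) + 2) ^ (-γ) := by
    intro p
    have hp2 : (0 : ℝ) < (p : ℝ) + 2 := by positivity
    have hm'p : 0 < m' (p + 1) := hm'pos (p + 1) (by omega)
    have h1 : M p * m' (p + 1) ≤ a * M (p + 1) := by
      have := (hP1 (p + 1) (by omega)).2
      simpa using this
    have hpow : ((p : ℝ) + 2) ^ (-γ) * (((p : ℝ) + 2) ^ γ) = 1 := by
      rw [← Real.rpow_add hp2]; simp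
    have hlb : c * ((p : ℝ) + 2) ^ γ ≤ m' (p + 1) := by
      have := hmono p
      calc c * ((p : ℝ) + 2) ^ γ
          ≤ (((p : ℝ) + 2) ^ (-γ) * m' (p + 1)) * ((p : ℝ) + 2) ^ γ := by
            apply mul_le_mul_of_nonneg_right this (Real.rpow_nonneg hp2.le _)
        _ = m' (p + 1) * (((p : ℝ) + 2) ^ (-γ) * ((p : ℝ) + 2) ^ γ) := by ring
        _ = m' (p + 1) := by rw [hpow, mul_one]
    have hlb0 : 0 < c * ((p : ℝ) + 2) ^ γ := mul_pos hc0 (Real.rpow_pos_of_pos hp2 _)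
    have h2 : M p / M (p + 1) ≤ a / m' (p + 1) := by
      rw [div_le_div_iff₀ (hpos (p + 1)) hm'p]
      linarith [h1]
    refine h2.trans ?_
    rw [div_le_iff₀ hm'p] at *
    have : a / c * ((p : ℝ) + 2) ^ (-γ) * (c * ((p : ℝ) + 2) ^ γ) = a := by
      field_simp
      linear_combination hpow
    calc a = a / c * ((p : ℝ) + 2) ^ (-γ) * (c * ((p : ℝ) + 2) ^ γ) := this.symm
      _ ≤ a / c * ((p : ℝ) + 2) ^ (-γ) * m' (p + 1) := by
          apply mul_le_mul_of_nonneg_left hlb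
          positivity
  -- comparison with K * (p+2)^(-γ/γ')
  set s : ℝ := γ / γ' with hs
  have hs1 : 1 < s := (one_lt_div hγ'0).2 hγ'
  have hsum : Summable (fun p : ℕ => ((p : ℝ) + 2) ^ (-s)) := by
    have : Summable (fun p : ℕ => ((p + 2 : ℕ) : ℝ) ^ (-s)) := by
      exact (summable_nat_add_iff 2).2 (Real.summable_nat_rpow.2 (by linarith))
    simpa [Nat.cast_add] using this
  refine Summable.of_nonneg_of_le
    (fun p => Real.rpow_nonneg (div_pos (hpos p) (hpos (p + 1))).le _)
    (fun p => ?_) (hsum.mul_left ((a / c) ^ (1 / γ')))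
  ·
    have hp2 : (0 : ℝ) < (p : ℝ) + 2 := by positivity
    have hbase : (0 : ℝ) ≤ (a / c) * ((p : ℝ) + 2) ^ (-γ) := by positivity
    calc (M p / M (p + 1)) ^ (1 / γ')
        ≤ ((a / c) * ((p : ℝ) + 2) ^ (-γ)) ^ (1 / γ') :=
          Real.rpow_le_rpow (div_pos (hpos p) (hpos (p + 1))).le (key p) (by positivity)
      _ = (a / c) ^ (1 / γ') * (((p : ℝ) + 2) ^ (-γ)) ^ (1 / γ') :=
          Real.mul_rpow (by positivity) (Real.rpow_nonneg hp2.le _)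
      _ = (a / c) ^ (1 / γ') * ((p : ℝ) + 2) ^ (-s) := by
          rw [← Real.rpow_mul hp2.le]
          congr 1
          rw [hs]
          field_simp
end

section
/- For the Gevrey sequence of order α > 0, M_p = (p!)^α, property (P_γ) holds if and only if γ ≤ α; consequently the growth index γ(M) = sup{γ > 0 : (P_γ) holds} equals α. -/
/-- Property (P_γ) for a sequence `M` (with `M 0 = 1`): there exist a sequence
`m'` of positive reals (for indices `p ≥ 1`) and a constant `a ≥ 1` such that
`a⁻¹ M p ≤ M (p-1) * m' p ≤ a * M p` for all `p ≥ 1`, and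
`((p+1)^(-γ) * m' p)` is increasing in `p ≥ 1`. -/
def PropertyP (M : ℕ → ℝ) (γ : ℝ) : Prop :=
  ∃ m' : ℕ → ℝ, ∃ a : ℝ, 1 ≤ a ∧ (∀ p, 1 ≤ p → 0 < m' p) ∧
    (∀ p : ℕ, 1 ≤ p → a⁻¹ * M p ≤ M (p - 1) * m' p ∧ M (p - 1) * m' p ≤ a * M p) ∧
    (∀ p : ℕ, 1 ≤ p → ((p : ℝ) + 1) ^ (-γ) * m' p ≤ ((p : ℝ) + 2) ^ (-γ) * m' (p + 1))


open Real

/-- Monotonicity of `(x+1)^(-γ) x^α` for `0 ≤ γ ≤ α`. -/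
lemma gevrey_mono_aux (α γ : ℝ) (hγ : 0 ≤ γ) (hγα : γ ≤ α) (x : ℝ) (hx : 1 ≤ x) :
    (x + 1) ^ (-γ) * x ^ α ≤ (x + 2) ^ (-γ) * (x + 1) ^ α := by
  have hx0 : 0 < x := lt_of_lt_of_le one_pos hx
  have h1 : (0:ℝ) < x + 1 := by linarith
  have h2 : (0:ℝ) < x + 2 := by linarith
  rw [Real.rpow_neg h1.le, Real.rpow_neg h2.le, inv_mul_eq_div, inv_mul_eq_div,
    div_le_div_iff₀ (Real.rpow_pos_of_pos h1 γ) (Real.rpow_pos_of_pos h2 γ)]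
  have key : x ^ α * (x + 2) ^ γ ≤ (x + 1) ^ (α + γ) := by
    have e1 : x ^ α = x ^ (α - γ) * x ^ γ := by
      rw [← Real.rpow_add hx0]; ring_nf
    have e2 : x ^ γ * (x + 2) ^ γ = (x * (x + 2)) ^ γ := (Real.mul_rpow hx0.le h2.le).symm
    have e3 : (x * (x + 2)) ^ γ ≤ ((x + 1) * (x + 1)) ^ γ := by
      apply Real.rpow_le_rpow (by positivity) (by nlinarith) hγ
    have e4 : x ^ (α - γ) ≤ (x + 1) ^ (α - γ) :=
      Real.rpow_le_rpow hx0.le (by linarith) (by linarith)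
    calc x ^ α * (x + 2) ^ γ = x ^ (α - γ) * (x * (x + 2)) ^ γ := by rw [e1, ← e2]; ring
      _ ≤ (x + 1) ^ (α - γ) * ((x + 1) * (x + 1)) ^ γ :=
          mul_le_mul e4 e3 (by positivity) (by positivity)
      _ = (x + 1) ^ (α - γ) * ((x + 1) ^ γ * (x + 1) ^ γ) := by
          rw [Real.mul_rpow h1.le h1.le]
      _ = (x + 1) ^ (α + γ) := by
          rw [← Real.rpow_add h1, ← Real.rpow_add h1]; ring_nf
  calc x ^ α * (x + 2) ^ γ ≤ (x + 1) ^ (α + γ) := key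
    _ = (x + 1) ^ α * (x + 1) ^ γ := by rw [← Real.rpow_add h1]

lemma gevrey_fact_eq (α : ℝ) (p : ℕ) (hp : 1 ≤ p) :
    ((p - 1).factorial : ℝ) ^ α * (p : ℝ) ^ α = (p.factorial : ℝ) ^ α := by
  rw [← Real.mul_rpow (by positivity) (by positivity)]
  congr 1
  rw [mul_comm]
  exact_mod_cast congrArg (Nat.cast : ℕ → ℝ) (Nat.mul_factorial_pred (by omega))

theorem gevrey_growth_index (α : ℝ) (hα : 0 < α) :
    (∀ γ : ℝ, 0 < γ →
      (PropertyP (fun p : ℕ => (p.factorial : ℝ) ^ α) γ ↔ γ ≤ α)) ∧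
    sSup {γ : ℝ | 0 < γ ∧ PropertyP (fun p : ℕ => (p.factorial : ℝ) ^ α) γ} = α := by
  have hiff : ∀ γ : ℝ, 0 < γ →
      (PropertyP (fun p : ℕ => (p.factorial : ℝ) ^ α) γ ↔ γ ≤ α) := by
    intro γ hγ
    constructor
    · rintro ⟨m', a, ha1, hpos, hbd, hmono⟩
      by_contra hlt
      push_neg at hlt
      have ha0 : 0 < a := lt_of_lt_of_le one_pos ha1
      -- m' p ≤ a * p^α and a⁻¹ ≤ m' 1
      have hup : ∀ p : ℕ, 1 ≤ p → m' p ≤ a * (p : ℝ) ^ α := by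
        intro p hp
        have h := (hbd p hp).2
        simp only at h
        have hM : ((p - 1).factorial : ℝ) ^ α * m' p ≤ a * ((p.factorial : ℝ) ^ α) := h
        have hMp : (0:ℝ) < ((p - 1).factorial : ℝ) ^ α := by positivity
        have heq := gevrey_fact_eq α p hp
        rw [← heq] at hM
        have := (mul_le_mul_iff_right₀ hMp).mp (by linarith [hM] : ((p-1).factorial:ℝ)^α * m' p ≤ ((p-1).factorial:ℝ)^α * (a * (p:ℝ)^α))
        · exact this
      have hm1 : a⁻¹ ≤ m' 1 := by
        have h := (hbd 1 le_rfl).1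
        simp only [Nat.factorial] at h
        norm_num [Real.one_rpow] at h
        linarith
      -- telescoping : 2^(-γ) * m' 1 ≤ (p+1)^(-γ) * m' p
      have htel : ∀ p : ℕ, 1 ≤ p → (2:ℝ) ^ (-γ) * m' 1 ≤ ((p:ℝ) + 1) ^ (-γ) * m' p := by
        intro p hp
        induction p with
        | zero => omega
        | succ n ih =>
          rcases Nat.eq_or_lt_of_le hp with h1 | h1
          · simp [← h1]; norm_num
          · have hn : 1 ≤ n := by omega
            refine le_trans (ih hn) ?_
            have := hmono n hn
            push_cast
            convert this using 3
            · rfl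
            · push_cast; ring
      -- combine
      have hkey : ∀ p : ℕ, 1 ≤ p → (2:ℝ) ^ (-γ) * a⁻¹ ≤ a * (p : ℝ) ^ (α - γ) := by
        intro p hp
        have hp0 : (0:ℝ) < p := by exact_mod_cast hp
        have hp1 : (0:ℝ) < (p:ℝ) + 1 := by linarith
        have c1 : (2:ℝ) ^ (-γ) * a⁻¹ ≤ (2:ℝ) ^ (-γ) * m' 1 := by
          have : (0:ℝ) < (2:ℝ) ^ (-γ) := by positivity
          nlinarith [hm1]
        have c2 := htel p hp
        have c3 : ((p:ℝ) + 1) ^ (-γ) * m' p ≤ ((p:ℝ) + 1) ^ (-γ) * (a * (p:ℝ) ^ α) := by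
          have : (0:ℝ) < ((p:ℝ) + 1) ^ (-γ) := by positivity
          nlinarith [hup p hp]
        have c4 : ((p:ℝ) + 1) ^ (-γ) ≤ (p:ℝ) ^ (-γ) := by
          rw [Real.rpow_neg hp1.le, Real.rpow_neg hp0.le]
          apply inv_anti₀ (Real.rpow_pos_of_pos hp0 γ)
          exact Real.rpow_le_rpow hp0.le (by linarith) hγ.le
        have c5 : ((p:ℝ) + 1) ^ (-γ) * (a * (p:ℝ) ^ α) ≤ (p:ℝ) ^ (-γ) * (a * (p:ℝ) ^ α) := by
          have : (0:ℝ) < a * (p:ℝ) ^ α := by positivity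
          nlinarith
        have c6 : (p:ℝ) ^ (-γ) * (a * (p:ℝ) ^ α) = a * (p:ℝ) ^ (α - γ) := by
          rw [show α - γ = -γ + α by ring, Real.rpow_add hp0]; ring
        linarith
      -- contradiction with tendsto 0
      have htend : Filter.Tendsto (fun p : ℕ => a * (p:ℝ) ^ (α - γ)) Filter.atTop (nhds 0) := by
        have h1 : Filter.Tendsto (fun x : ℝ => x ^ (-(γ - α))) Filter.atTop (nhds 0) :=
          tendsto_rpow_neg_atTop (by linarith)
        have h2 := (h1.comp tendsto_natCast_atTop_atTop).const_mul a
        simpa [Function.comp, show -(γ - α) = α - γ by ring] using h2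
      have hc : (0:ℝ) < (2:ℝ) ^ (-γ) * a⁻¹ := by positivity
      have := (htend.eventually (eventually_lt_nhds hc)).and (Filter.eventually_ge_atTop 1)
      obtain ⟨p, hplt, hp1⟩ := this.exists
      exact absurd (hkey p hp1) (not_le.mpr hplt)
    · intro hγα
      refine ⟨fun p => (p : ℝ) ^ α, 1, le_rfl, ?_, ?_, ?_⟩
      · intro p hp
        have : (0:ℝ) < p := by exact_mod_cast hp
        positivity
      · intro p hp
        simp only [inv_one, one_mul]
        rw [gevrey_fact_eq α p hp]
        exact ⟨le_rfl, le_rfl⟩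
      · intro p hp
        have hx : (1:ℝ) ≤ (p:ℝ) := by exact_mod_cast hp
        have := gevrey_mono_aux α γ hγ.le hγα (p:ℝ) hx
        push_cast
        convert this using 2 <;> ring
  refine ⟨hiff, ?_⟩
  have hset : {γ : ℝ | 0 < γ ∧ PropertyP (fun p : ℕ => (p.factorial : ℝ) ^ α) γ} = Set.Ioc 0 α := by
    ext γ
    simp only [Set.mem_setOf_eq, Set.mem_Ioc]
    constructor
    · rintro ⟨h1, h2⟩; exact ⟨h1, (hiff γ h1).mp h2⟩
    · rintro ⟨h1, h2⟩; exact ⟨h1, (hiff γ h1).mpr h2⟩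
  rw [hset]
  exact csSup_Ioc hα
end
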